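/- arXiv:0708.2491 — 2 statements merged into one kernel-verified Lean document; each statement's English description precedes it below -/
import Mathlib

section
/- The series u₂(x) = Σ_{odd n ≥ 1} X^(n)(x)/n! converges uniformly on [0,a]: the partial sums of the series converge uniformly on [0,a] to a function u₂ : [0,a] → ℂ. -/
/- Induction gives `‖X^(n)(x)‖ ≤ (M x)^n` on `[0,a]`, where `M ≥ 1` bounds `|q|` there: the factor
`n` in front of the integral cancels the `1/n` produced by integrating `ξ^(n-1)`. Hence the odd terms
of the series are dominated by those of `sinh (M a)`, and the Weierstrass M-test applies. -/

open MeasureTheory Set Filter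

/-- The sequence X̃^(n): X̃^(0) ≡ 1; for n ≥ 1, X̃^(n)(x) = n ∫₀ˣ X̃^(n-1)(ξ) dξ
if n is even, and X̃^(n)(x) = n ∫₀ˣ X̃^(n-1)(ξ) q(ξ) dξ if n is odd. -/
noncomputable def Xtilde (q : ℝ → ℂ) : ℕ → ℝ → ℂ
  | 0 => fun _ => 1
  | n + 1 => fun x => ((n + 1 : ℕ) : ℂ) *
      ∫ ξ in (0:ℝ)..x, Xtilde q n ξ * (if Even (n + 1) then 1 else q ξ)

/-- The sequence X^(n): X^(0) ≡ 1; for n ≥ 1, X^(n)(x) = n ∫₀ˣ X^(n-1)(ξ) q(ξ) dξ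
if n is even, and X^(n)(x) = n ∫₀ˣ X^(n-1)(ξ) dξ if n is odd. -/
noncomputable def Xup (q : ℝ → ℂ) : ℕ → ℝ → ℂ
  | 0 => fun _ => 1
  | n + 1 => fun x => ((n + 1 : ℕ) : ℂ) *
      ∫ ξ in (0:ℝ)..x, Xup q n ξ * (if Even (n + 1) then q ξ else 1)

lemma norm_integral_le_of_norm_le_pow {g : ℝ → ℂ} {C x : ℝ} (n : ℕ) (hx : 0 ≤ x)
    (hg : ∀ ξ ∈ Ioc 0 x, ‖g ξ‖ ≤ C * ξ ^ n) :
    ‖∫ ξ in (0:ℝ)..x, g ξ‖ ≤ C * (x ^ (n + 1) / (n + 1)) := by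
  calc ‖∫ ξ in (0:ℝ)..x, g ξ‖ ≤ ∫ ξ in (0:ℝ)..x, C * ξ ^ n :=
        intervalIntegral.norm_integral_le_of_norm_le hx (ae_of_all _ hg)
          ((continuous_const.mul (continuous_pow n)).intervalIntegrable 0 x)
    _ = C * (x ^ (n + 1) / (n + 1)) := by
        rw [intervalIntegral.integral_const_mul, integral_pow]
        simp

lemma norm_Xup_le {q : ℝ → ℂ} {a M : ℝ} (hM : 1 ≤ M) (hq : ∀ ξ ∈ Icc 0 a, ‖q ξ‖ ≤ M)
    (n : ℕ) {x : ℝ} (hx : x ∈ Icc 0 a) : ‖Xup q n x‖ ≤ (M * x) ^ n := by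
  induction n generalizing x with
  | zero => simp [Xup]
  | succ n ih =>
    have hfactor : ∀ ξ ∈ Icc 0 a, ‖(if Even (n + 1) then q ξ else 1 : ℂ)‖ ≤ M := by
      intro ξ hξ
      split_ifs
      · exact hq ξ hξ
      · simpa using hM
    have hintegrand : ∀ ξ ∈ Ioc 0 x,
        ‖Xup q n ξ * (if Even (n + 1) then q ξ else 1)‖ ≤ M ^ (n + 1) * ξ ^ n := by
      intro ξ hξ
      have hξa : ξ ∈ Icc 0 a := ⟨hξ.1.le, hξ.2.trans hx.2⟩
      calc _ = ‖Xup q n ξ‖ * ‖(if Even (n + 1) then q ξ else 1 : ℂ)‖ := norm_mul _ _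
        _ ≤ (M * ξ) ^ n * M :=
            mul_le_mul (ih hξa) (hfactor ξ hξa) (norm_nonneg _)
              (pow_nonneg (mul_nonneg (zero_le_one.trans hM) hξa.1) n)
        _ = M ^ (n + 1) * ξ ^ n := by ring
    have hintegral := norm_integral_le_of_norm_le_pow n hx.1 hintegrand
    calc ‖Xup q (n + 1) x‖
        = (n + 1) * ‖∫ ξ in (0:ℝ)..x, Xup q n ξ * (if Even (n + 1) then q ξ else 1)‖ := by
          rw [Xup, norm_mul, Complex.norm_natCast]
          push_cast
          rfl
      _ ≤ (n + 1) * (M ^ (n + 1) * (x ^ (n + 1) / (n + 1))) := by gcongr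
      _ = (M * x) ^ (n + 1) := by field_simp; ring

theorem stmt_3_general (a : ℝ) (q : ℝ → ℂ) (hq : ContinuousOn q (Set.Icc 0 a)) :
    ∃ u₂ : ℝ → ℂ, TendstoUniformlyOn
      (fun N x => ∑ k ∈ Finset.range N, Xup q (2 * k + 1) x / (Nat.factorial (2 * k + 1) : ℂ))
      u₂ Filter.atTop (Set.Icc 0 a) := by
  obtain ⟨C, hC⟩ := isCompact_Icc.exists_bound_of_continuousOn hq
  have hM : 1 ≤ max 1 C := le_max_left _ _
  have hqM : ∀ x ∈ Icc 0 a, ‖q x‖ ≤ max 1 C := fun x hx => (hC x hx).trans (le_max_right _ _)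
  refine ⟨_, tendstoUniformlyOn_tsum_nat (Real.hasSum_sinh (max 1 C * a)).summable ?_⟩
  intro k x hx
  rw [norm_div, Complex.norm_natCast]
  gcongr
  calc ‖Xup q (2 * k + 1) x‖ ≤ (max 1 C * x) ^ (2 * k + 1) := norm_Xup_le hM hqM _ hx
    _ ≤ (max 1 C * a) ^ (2 * k + 1) := by
        gcongr
        · exact mul_nonneg (zero_le_one.trans hM) hx.1
        · exact hx.2

/-- The series u₂(x) = Σ_{odd n ≥ 1} X^(n)(x)/n! converges uniformly
on [0,a]: its partial sums converge uniformly on [0,a] to a function u₂ : [0,a] → ℂ. -/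
theorem stmt_3 (a : ℝ) (ha : 0 < a) (q : ℝ → ℂ) (hq : ContinuousOn q (Set.Icc 0 a)) :
    ∃ u₂ : ℝ → ℂ, TendstoUniformlyOn
      (fun N x => ∑ k ∈ Finset.range N, Xup q (2 * k + 1) x / (Nat.factorial (2 * k + 1) : ℂ))
      u₂ Filter.atTop (Set.Icc 0 a) :=
  stmt_3_general a q hq
end

section
/- The function u₁(x) = Σ_{even n ≥ 0} X̃^(n)(x)/n! is twice differentiable on (0,a) and satisfies the one-dimensional stationary Schrödinger equation −u₁''(x) + q(x) u₁(x) = 0 for all x ∈ (0,a). -/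
/- The integrand of `Xtilde q (n + 1)` is `Xtilde q n` times a weight that is `q` at odd steps and
`1` at even ones. Hence with `C ≥ max 1 ‖q‖` induction gives `‖X̃⁽ⁿ⁾(x)‖ ≤ (C x)ⁿ`, so both
`∑ X̃⁽²ᵏ⁾/(2k)!` and `∑ X̃⁽²ᵏ⁺¹⁾/(2k+1)!` converge uniformly on `[0, a]` and may be differentiated
termwise. By the fundamental theorem of calculus the derivative of `X̃⁽²ᵏ⁺²⁾/(2k+2)!` is
`X̃⁽²ᵏ⁺¹⁾/(2k+1)!` and that of `X̃⁽²ᵏ⁺¹⁾/(2k+1)!` is `q X̃⁽²ᵏ⁾/(2k)!`, so `u₁'' = q u₁`. -/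

open MeasureTheory Set Filter

/-- u₁(x) = Σ_{even n ≥ 0} X̃^(n)(x)/n!, written as a sum over even indices n = 2k. -/
noncomputable def u₁ (q : ℝ → ℂ) (x : ℝ) : ℂ :=
  ∑' k : ℕ, Xtilde q (2 * k) x / (Nat.factorial (2 * k) : ℂ)

/-- u₂(x) = Σ_{odd n ≥ 1} X^(n)(x)/n!, written as a sum over odd indices n = 2k+1. -/
noncomputable def u₂ (q : ℝ → ℂ) (x : ℝ) : ℂ :=
  ∑' k : ℕ, Xup q (2 * k + 1) x / (Nat.factorial (2 * k + 1) : ℂ)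

open scoped Nat

noncomputable def XtildeWeight (q : ℝ → ℂ) (n : ℕ) (ξ : ℝ) : ℂ :=
  if Even (n + 1) then 1 else q ξ

noncomputable def XtildeTerm (q : ℝ → ℂ) (n : ℕ) (x : ℝ) : ℂ :=
  Xtilde q n x / (n ! : ℂ)

section

variable {q : ℝ → ℂ} {a C x : ℝ}

lemma Xtilde_succ_apply (q : ℝ → ℂ) (n : ℕ) (x : ℝ) :
    Xtilde q (n + 1) x = ((n + 1 : ℕ) : ℂ) * ∫ ξ in (0 : ℝ)..x, Xtilde q n ξ * XtildeWeight q n ξ :=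
  rfl

lemma XtildeWeight_two_mul (q : ℝ → ℂ) (k : ℕ) (ξ : ℝ) : XtildeWeight q (2 * k) ξ = q ξ := by
  simp [XtildeWeight, parity_simps]

lemma XtildeWeight_two_mul_add_one (q : ℝ → ℂ) (k : ℕ) (ξ : ℝ) :
    XtildeWeight q (2 * k + 1) ξ = 1 := by
  simp [XtildeWeight, parity_simps]

lemma continuousOn_XtildeWeight {s : Set ℝ} (hq : ContinuousOn q s) (n : ℕ) :
    ContinuousOn (XtildeWeight q n) s := by
  unfold XtildeWeight
  split_ifs
  exacts [continuousOn_const, hq]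

lemma norm_XtildeWeight_le {ξ : ℝ} (hC1 : 1 ≤ C) (hC : ‖q ξ‖ ≤ C) (n : ℕ) :
    ‖XtildeWeight q n ξ‖ ≤ C := by
  unfold XtildeWeight
  split_ifs
  exacts [by simpa using hC1, hC]

lemma continuousOn_Xtilde (ha : 0 ≤ a) (hq : ContinuousOn q (Icc 0 a)) (n : ℕ) :
    ContinuousOn (Xtilde q n) (Icc 0 a) := by
  induction n with
  | zero => exact continuousOn_const
  | succ n ih =>
    have hint : IntegrableOn (fun ξ => Xtilde q n ξ * XtildeWeight q n ξ) (uIcc 0 a) := by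
      rw [uIcc_of_le ha]
      exact (ih.mul (continuousOn_XtildeWeight hq n)).integrableOn_Icc
    have := intervalIntegral.continuousOn_primitive_interval hint
    rw [uIcc_of_le ha] at this
    exact continuousOn_const.mul this

lemma norm_Xtilde_le (hC1 : 1 ≤ C) (hC : ∀ ξ ∈ Icc 0 a, ‖q ξ‖ ≤ C) (n : ℕ) :
    ∀ x ∈ Icc 0 a, ‖Xtilde q n x‖ ≤ (C * x) ^ n := by
  induction n with
  | zero => simp [Xtilde]
  | succ n ih =>
    intro x hx
    have hC0 : 0 ≤ C := zero_le_one.trans hC1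
    have hintegrand :
        ∀ ξ ∈ Ioc 0 x, ‖Xtilde q n ξ * XtildeWeight q n ξ‖ ≤ C ^ (n + 1) * ξ ^ n := by
      intro ξ hξ
      have hξa : ξ ∈ Icc 0 a := ⟨hξ.1.le, hξ.2.trans hx.2⟩
      calc ‖Xtilde q n ξ * XtildeWeight q n ξ‖
          ≤ (C * ξ) ^ n * C := by
            rw [norm_mul]
            exact mul_le_mul (ih ξ hξa) (norm_XtildeWeight_le hC1 (hC ξ hξa) n) (norm_nonneg _)
              (pow_nonneg (mul_nonneg hC0 hξa.1) n)
        _ = C ^ (n + 1) * ξ ^ n := by ring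
    have hintegral := intervalIntegral.norm_integral_le_of_norm_le (μ := volume) hx.1
      (ae_of_all _ hintegrand)
      ((by fun_prop : Continuous fun ξ : ℝ => C ^ (n + 1) * ξ ^ n).intervalIntegrable _ _)
    rw [intervalIntegral.integral_const_mul, integral_pow] at hintegral
    rw [Xtilde_succ_apply, norm_mul, Complex.norm_natCast]
    calc ((n + 1 : ℕ) : ℝ) * ‖∫ ξ in (0 : ℝ)..x, Xtilde q n ξ * XtildeWeight q n ξ‖
        ≤ ((n + 1 : ℕ) : ℝ) * (C ^ (n + 1) * ((x ^ (n + 1) - 0 ^ (n + 1)) / (n + 1))) := by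
          gcongr
      _ = (C * x) ^ (n + 1) := by
          push_cast
          field_simp
          ring

lemma hasDerivAt_Xtilde_succ (hq : ContinuousOn q (Icc 0 a)) (n : ℕ) (hx : x ∈ Ioo 0 a) :
    HasDerivAt (Xtilde q (n + 1)) (((n + 1 : ℕ) : ℂ) * (Xtilde q n x * XtildeWeight q n x)) x := by
  have hf : ContinuousOn (fun ξ => Xtilde q n ξ * XtildeWeight q n ξ) (Icc 0 a) :=
    (continuousOn_Xtilde (hx.1.trans hx.2).le hq n).mul (continuousOn_XtildeWeight hq n)
  have hint : IntervalIntegrable (fun ξ => Xtilde q n ξ * XtildeWeight q n ξ) volume 0 x :=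
    (hf.mono (by rw [uIcc_of_le hx.1.le]; exact Icc_subset_Icc_right hx.2.le)).intervalIntegrable
  exact (intervalIntegral.integral_hasDerivAt_right hint
    ((hf.mono Ioo_subset_Icc_self).stronglyMeasurableAtFilter isOpen_Ioo x hx)
    (hf.continuousAt (Icc_mem_nhds hx.1 hx.2))).const_mul _

lemma hasDerivAt_XtildeTerm_succ (hq : ContinuousOn q (Icc 0 a)) (n : ℕ) (hx : x ∈ Ioo 0 a) :
    HasDerivAt (XtildeTerm q (n + 1)) (XtildeTerm q n x * XtildeWeight q n x) x := by
  refine ((hasDerivAt_Xtilde_succ hq n hx).div_const ((n + 1)! : ℂ)).congr_deriv ?_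
  rw [XtildeTerm, Nat.factorial_succ]
  push_cast
  field_simp

lemma norm_XtildeTerm_le (hC1 : 1 ≤ C) (hC : ∀ ξ ∈ Icc 0 a, ‖q ξ‖ ≤ C) (hx : x ∈ Icc 0 a)
    (n : ℕ) : ‖XtildeTerm q n x‖ ≤ (C * a) ^ n / n ! := by
  rw [XtildeTerm, norm_div, Complex.norm_natCast]
  gcongr
  refine (norm_Xtilde_le hC1 hC n x hx).trans ?_
  have hC0 : 0 ≤ C := zero_le_one.trans hC1
  gcongr
  exacts [mul_nonneg hC0 hx.1, hx.2]

lemma summable_XtildeTerm_comp (hC1 : 1 ≤ C) (hC : ∀ ξ ∈ Icc 0 a, ‖q ξ‖ ≤ C)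
    (hx : x ∈ Icc 0 a) {g : ℕ → ℕ} (hg : g.Injective) :
    Summable fun k => XtildeTerm q (g k) x :=
  .of_norm_bounded ((Real.summable_pow_div_factorial (C * a)).comp_injective hg)
    fun k => norm_XtildeTerm_le hC1 hC hx (g k)

lemma hasDerivAt_XtildeTerm_two_mul_add_two (hq : ContinuousOn q (Icc 0 a)) (k : ℕ)
    (hx : x ∈ Ioo 0 a) : HasDerivAt (XtildeTerm q (2 * k + 2)) (XtildeTerm q (2 * k + 1) x) x := by
  simpa only [XtildeWeight_two_mul_add_one, mul_one] using
    hasDerivAt_XtildeTerm_succ hq (2 * k + 1) hx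

lemma hasDerivAt_XtildeTerm_two_mul_add_one (hq : ContinuousOn q (Icc 0 a)) (k : ℕ)
    (hx : x ∈ Ioo 0 a) :
    HasDerivAt (XtildeTerm q (2 * k + 1)) (q x * XtildeTerm q (2 * k) x) x := by
  have h := hasDerivAt_XtildeTerm_succ hq (2 * k) hx
  rwa [XtildeWeight_two_mul, mul_comm (XtildeTerm _ _ _)] at h

lemma hasDerivAt_u₁ (hq : ContinuousOn q (Icc 0 a)) (hC1 : 1 ≤ C)
    (hC : ∀ ξ ∈ Icc 0 a, ‖q ξ‖ ≤ C) (hx : x ∈ Ioo 0 a) :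
    HasDerivAt (u₁ q) (∑' k, XtildeTerm q (2 * k + 1) x) x := by
  -- The constant term is split off: its derivative is not of the form `X̃⁽²ᵏ⁺¹⁾/(2k+1)!`.
  have hsplit : ∀ y ∈ Icc 0 a, u₁ q y = 1 + ∑' k, XtildeTerm q (2 * k + 2) y := by
    intro y hy
    have hsum := summable_XtildeTerm_comp hC1 hC hy (g := (2 * ·))
      (mul_right_injective₀ two_ne_zero)
    change ∑' k, XtildeTerm q (2 * k) y = _
    rw [hsum.tsum_eq_zero_add]
    simp [Xtilde, XtildeTerm, mul_add]
  have hshifted := hasDerivAt_tsum_of_isPreconnected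
    ((Real.summable_pow_div_factorial (C * a)).comp_injective (i := (2 * · + 1))
      fun _ _ h => by simpa using h)
    isOpen_Ioo isPreconnected_Ioo (fun k y hy => hasDerivAt_XtildeTerm_two_mul_add_two hq k hy)
    (fun k y hy => norm_XtildeTerm_le hC1 hC (Ioo_subset_Icc_self hy) _) hx
    (summable_XtildeTerm_comp hC1 hC (Ioo_subset_Icc_self hx) fun _ _ h => by simpa using h) hx
  exact (hshifted.const_add 1).congr_of_eventuallyEq
    (eventually_of_mem (Icc_mem_nhds hx.1 hx.2) hsplit)

lemma hasDerivAt_tsum_XtildeTerm_two_mul_add_one (hq : ContinuousOn q (Icc 0 a)) (hC1 : 1 ≤ C)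
    (hC : ∀ ξ ∈ Icc 0 a, ‖q ξ‖ ≤ C) (hx : x ∈ Ioo 0 a) :
    HasDerivAt (fun y => ∑' k, XtildeTerm q (2 * k + 1) y) (q x * u₁ q x) x := by
  have hbound : ∀ k, ∀ y ∈ Ioo 0 a,
      ‖q y * XtildeTerm q (2 * k) y‖ ≤ C * ((C * a) ^ (2 * k) / (2 * k)!) := fun k y hy => by
    rw [norm_mul]
    exact mul_le_mul (hC y (Ioo_subset_Icc_self hy))
      (norm_XtildeTerm_le hC1 hC (Ioo_subset_Icc_self hy) _) (norm_nonneg _) (by linarith)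
  rw [u₁, ← tsum_mul_left]
  exact hasDerivAt_tsum_of_isPreconnected
    (((Real.summable_pow_div_factorial (C * a)).comp_injective
      (mul_right_injective₀ two_ne_zero)).mul_left C)
    isOpen_Ioo isPreconnected_Ioo (fun k y hy => hasDerivAt_XtildeTerm_two_mul_add_one hq k hy)
    hbound hx
    (summable_XtildeTerm_comp hC1 hC (Ioo_subset_Icc_self hx) fun _ _ h => by simpa using h) hx

end

theorem stmt_6_general (a : ℝ) (q : ℝ → ℂ) (hq : ContinuousOn q (Set.Icc 0 a)) :
    (∀ x ∈ Set.Ioo 0 a, DifferentiableAt ℝ (u₁ q) x ∧ DifferentiableAt ℝ (deriv (u₁ q)) x) ∧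
    ∀ x ∈ Set.Ioo 0 a, -(deriv (deriv (u₁ q)) x) + q x * u₁ q x = 0 := by
  obtain ⟨M, hM⟩ := isCompact_Icc.exists_bound_of_continuousOn hq
  have hC1 : 1 ≤ max M 1 := le_max_right _ _
  have hC : ∀ x ∈ Icc 0 a, ‖q x‖ ≤ max M 1 := fun x hx => (hM x hx).trans (le_max_left _ _)
  have hderiv2 : ∀ x ∈ Ioo 0 a, HasDerivAt (deriv (u₁ q)) (q x * u₁ q x) x := fun x hx =>
    (hasDerivAt_tsum_XtildeTerm_two_mul_add_one hq hC1 hC hx).congr_of_eventuallyEq <|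
      eventually_of_mem (isOpen_Ioo.mem_nhds hx) fun y hy => (hasDerivAt_u₁ hq hC1 hC hy).deriv
  refine ⟨fun x hx => ⟨(hasDerivAt_u₁ hq hC1 hC hx).differentiableAt,
    (hderiv2 x hx).differentiableAt⟩, fun x hx => ?_⟩
  rw [(hderiv2 x hx).deriv, neg_add_cancel]

/-- u₁(x) = Σ_{even n ≥ 0} X̃^(n)(x)/n! is twice differentiable on (0,a)
and satisfies −u₁''(x) + q(x) u₁(x) = 0 for all x ∈ (0,a). -/
theorem stmt_6 (a : ℝ) (ha : 0 < a) (q : ℝ → ℂ) (hq : ContinuousOn q (Set.Icc 0 a)) :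
    (∀ x ∈ Set.Ioo 0 a, DifferentiableAt ℝ (u₁ q) x ∧ DifferentiableAt ℝ (deriv (u₁ q)) x) ∧
    ∀ x ∈ Set.Ioo 0 a, -(deriv (deriv (u₁ q)) x) + q x * u₁ q x = 0 :=
  stmt_6_general a q hq
end
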